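/- The sequence x defined by x_k = 5 if k is a perfect square, x_k = 0 if k is even and not a perfect square, and x_k = 1 if k is odd and not a perfect square, is not statistically convergent, but F(x) = 1/2 for every Banach statistical limit functional F (i.e., x is GAS convergent to 1/2). -/

import Mathlib

/-!
Off the squares, which have density zero, `xseq` is `0` on the evens and `1` on the odds, and
both classes have positive density, so no statistical limit exists. On the other hand
`x k + x (k + 1) = 1` unless `k` or `k + 1` is a square, so `x + T x` converges statistically to
`1`; shift invariance then gives `2 F x = F x + F (T x) = 1`.
-/

open Filter

open scoped Classical in
/-- The sequence of partial densities of `P ⊆ ℕ`. -/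
noncomputable def densSeq (P : Set ℕ) (n : ℕ) : ℝ :=
  (((Finset.range n).filter (fun k => k ∈ P)).card : ℝ) / n

/-- `P` has natural density `d`. -/
def HasDensity (P : Set ℕ) (d : ℝ) : Prop :=
  Tendsto (densSeq P) atTop (nhds d)

/-- Statistical convergence of a real sequence to `l`. -/
def StatTendsto (x : ℕ → ℝ) (l : ℝ) : Prop :=
  ∀ ε : ℝ, 0 < ε → HasDensity {n | |x n - l| > ε} 0

/-- The space `l∞` of bounded real sequences with sup norm. -/
noncomputable abbrev Linf := lp (fun _ : ℕ => ℝ) ⊤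

/-- `F` is a Banach statistical limit functional on `l∞`. -/
def IsBSL (F : Linf →L[ℝ] ℝ) : Prop :=
  ‖F‖ = 1 ∧
  (∀ (x : Linf) (l : ℝ), StatTendsto (fun n => x n) l → F x = l) ∧
  (∀ s : Linf, HasDensity {n | ¬ 0 ≤ s n} 0 → 0 ≤ F s) ∧
  (∀ T : Linf → Linf,
    (∀ x : Linf, HasDensity {k | T x k ≠ x (k + 1)} 0) → ∀ x : Linf, F x = F (T x))

open scoped Classical in
/-- The sequence with value 5 on perfect squares, 0 on other even indices and 1 on
other odd indices. -/
noncomputable def xseq : ℕ → ℝ := fun k =>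
  if ∃ m, m * m = k then 5 else if Even k then 0 else 1

lemma xseq_memℓp : Memℓp xseq ⊤ := by
  apply memℓp_infty
  refine ⟨5, ?_⟩
  rintro r ⟨k, rfl⟩
  simp only [xseq, Real.norm_eq_abs]
  split_ifs <;> simp

/-- `xseq` as an element of `l∞`. -/
noncomputable def xLinf : Linf := ⟨xseq, xseq_memℓp⟩

open Topology

section Density

variable {A B P : Set ℕ}

lemma densSeq_nonneg (P : Set ℕ) (n : ℕ) : 0 ≤ densSeq P n := by
  unfold densSeq; positivity

lemma densSeq_mono (h : A ⊆ B) (n : ℕ) : densSeq A n ≤ densSeq B n := by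
  unfold densSeq
  gcongr

lemma densSeq_union_le (A B : Set ℕ) (n : ℕ) :
    densSeq (A ∪ B) n ≤ densSeq A n + densSeq B n := by
  unfold densSeq
  rw [← add_div]
  gcongr
  norm_cast
  refine (Finset.card_le_card fun k hk => ?_).trans (Finset.card_union_le _ _)
  simp only [Finset.mem_filter, Finset.mem_union, Set.mem_union] at hk ⊢
  tauto

lemma hasDensity_zero_mono (h : A ⊆ B) (hB : HasDensity B 0) : HasDensity A 0 :=
  squeeze_zero (densSeq_nonneg A) (densSeq_mono h) hB

lemma hasDensity_zero_union (hA : HasDensity A 0) (hB : HasDensity B 0) :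
    HasDensity (A ∪ B) 0 :=
  squeeze_zero (densSeq_nonneg _) (densSeq_union_le A B) (by simpa using hA.add hB)

lemma hasDensity_empty : HasDensity ∅ 0 := by
  have h : densSeq ∅ = 0 := funext fun n => by simp [densSeq]
  rw [HasDensity, h]
  exact tendsto_const_nhds

lemma not_hasDensity_univ_zero : ¬ HasDensity Set.univ 0 := by
  intro h
  have h1 : HasDensity Set.univ 1 := by
    refine tendsto_const_nhds.congr' ?_
    filter_upwards [eventually_ne_atTop 0] with n hn
    simp [densSeq, hn]
  exact one_ne_zero (tendsto_nhds_unique h1 h)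

lemma hasDensity_zero_preimage_add_one (hP : HasDensity P 0) :
    HasDensity ((· + 1) ⁻¹' P) 0 := by
  classical
  have hbound : ∀ n, densSeq ((· + 1) ⁻¹' P) n ≤ 2 * densSeq P (n + 1) := by
    intro n
    rcases Nat.eq_zero_or_pos n with rfl | hn
    · simp [densSeq]
    have hcard : ((Finset.range n).filter (fun k => k ∈ (· + 1) ⁻¹' P)).card ≤
        ((Finset.range (n + 1)).filter (fun k => k ∈ P)).card :=
      Finset.card_le_card_of_injOn (· + 1) (fun k hk => by simp_all) (fun _ _ _ _ => by simp)
    have hn' : (1 : ℝ) ≤ n := by exact_mod_cast hn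
    calc densSeq ((· + 1) ⁻¹' P) n
        ≤ ((Finset.range (n + 1)).filter (fun k => k ∈ P)).card / n := by
          unfold densSeq; gcongr
      _ ≤ ((Finset.range (n + 1)).filter (fun k => k ∈ P)).card / ((n + 1) / 2) := by
          gcongr; linarith
      _ = 2 * densSeq P (n + 1) := by rw [densSeq, div_div_eq_mul_div]; push_cast; ring
  have h2 : Tendsto (fun n => 2 * densSeq P (n + 1)) atTop (𝓝 0) := by
    simpa using ((tendsto_add_atTop_iff_nat 1).2 hP).const_mul 2
  exact squeeze_zero (densSeq_nonneg _) hbound h2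

open scoped Classical in
lemma card_filter_range_squares_le (n : ℕ) :
    ((Finset.range n).filter (fun k => ∃ m, m * m = k)).card ≤ Nat.sqrt n + 1 := by
  calc _ ≤ ((Finset.range (Nat.sqrt n + 1)).image (fun m => m * m)).card := by
        refine Finset.card_le_card fun k hk => ?_
        simp only [Finset.mem_filter, Finset.mem_range] at hk
        obtain ⟨hkn, m, rfl⟩ := hk
        exact Finset.mem_image.2 ⟨m, Finset.mem_range.2 (Nat.lt_succ_of_le
          (Nat.le_sqrt.2 hkn.le)), rfl⟩
    _ ≤ Nat.sqrt n + 1 := Finset.card_image_le.trans (Finset.card_range _).le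

lemma hasDensity_squares : HasDensity {k | ∃ m, m * m = k} 0 := by
  have hbound : ∀ n : ℕ, densSeq {k | ∃ m, m * m = k} n ≤ (√(n : ℝ))⁻¹ + 1 / n := by
    intro n
    rw [← Real.sqrt_div_self, ← add_div]
    unfold densSeq
    gcongr
    calc _ ≤ ((Nat.sqrt n + 1 : ℕ) : ℝ) := by exact_mod_cast card_filter_range_squares_le n
      _ ≤ √(n : ℝ) + 1 := by push_cast; gcongr; exact Real.nat_sqrt_le_real_sqrt
  have hlim : Tendsto (fun n : ℕ => (√(n : ℝ))⁻¹ + 1 / n) atTop (𝓝 0) := by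
    simpa using (tendsto_inv_atTop_zero.comp
      (Real.tendsto_sqrt_atTop.comp tendsto_natCast_atTop_atTop)).add
      tendsto_one_div_atTop_nhds_zero_nat
  exact squeeze_zero (densSeq_nonneg _) hbound hlim

lemma not_hasDensity_even_zero : ¬ HasDensity {k | Even k} 0 := by
  intro h
  refine not_hasDensity_univ_zero (hasDensity_zero_mono (fun k _ => ?_)
    (hasDensity_zero_union h (hasDensity_zero_preimage_add_one h)))
  simp only [Set.mem_union, Set.mem_ofPred_eq, Set.mem_preimage, Nat.even_add_one]
  tauto

lemma not_hasDensity_odd_zero : ¬ HasDensity {k | ¬ Even k} 0 := fun h =>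
  not_hasDensity_even_zero <| by
    simpa [Set.preimage, Nat.odd_add_one] using hasDensity_zero_preimage_add_one h

end Density

lemma statTendsto_of_hasDensity_ne {x : ℕ → ℝ} {l : ℝ} (h : HasDensity {k | x k ≠ l} 0) :
    StatTendsto x l := fun ε _ =>
  hasDensity_zero_mono (fun k (hk : ε < |x k - l|) => by
    intro hkl
    rw [hkl, sub_self, abs_zero] at hk
    linarith) h

lemma StatTendsto.eq_of_hasDensity_ne {x : ℕ → ℝ} {l a : ℝ} {A : Set ℕ} (hx : StatTendsto x l)
    (hA : ¬ HasDensity A 0) (hxA : HasDensity {k | k ∈ A ∧ x k ≠ a} 0) : l = a := by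
  by_contra hla
  have hε : 0 < |a - l| / 2 := by simpa [sub_eq_zero, eq_comm] using hla
  refine hA (hasDensity_zero_mono (fun k hk => ?_) (hasDensity_zero_union (hx _ hε) hxA))
  by_cases hxk : x k = a
  · left
    simp only [Set.mem_ofPred_eq, hxk]
    linarith
  · exact Or.inr ⟨hk, hxk⟩

section Xseq

variable {k : ℕ}

lemma xseq_of_even (hk : Even k) (hsq : ¬ ∃ m, m * m = k) : xseq k = 0 := by
  simp [xseq, hsq, hk]

lemma xseq_of_not_even (hk : ¬ Even k) (hsq : ¬ ∃ m, m * m = k) : xseq k = 1 := by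
  simp [xseq, hsq, hk]

lemma xseq_add_xseq_succ (h₀ : ¬ ∃ m, m * m = k) (h₁ : ¬ ∃ m, m * m = k + 1) :
    xseq k + xseq (k + 1) = 1 := by
  by_cases hk : Even k
  · rw [xseq_of_even hk h₀, xseq_of_not_even (by simpa [Nat.even_add_one]) h₁, zero_add]
  · rw [xseq_of_not_even hk h₀, xseq_of_even (Nat.even_add_one.2 hk) h₁, add_zero]

end Xseq

lemma memℓp_shift (x : Linf) : Memℓp (fun k => x (k + 1)) ⊤ :=
  memℓp_infty ((lp.memℓp x).bddAbove.mono (by rintro _ ⟨k, rfl⟩; exact ⟨k + 1, rfl⟩))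

noncomputable def shiftLinf (x : Linf) : Linf := ⟨fun k => x (k + 1), memℓp_shift x⟩

@[simp]
lemma shiftLinf_apply (x : Linf) (k : ℕ) : shiftLinf x k = x (k + 1) := rfl

theorem xseq_not_stat_but_GAS :
    (¬ ∃ l : ℝ, StatTendsto xseq l) ∧
    (∀ F : Linf →L[ℝ] ℝ, IsBSL F → F xLinf = 1 / 2) := by
  constructor
  · rintro ⟨l, hl⟩
    have h₀ : l = 0 := hl.eq_of_hasDensity_ne not_hasDensity_even_zero <|
      hasDensity_zero_mono (fun k ⟨hk, hx⟩ => not_not.1 fun hsq => hx (xseq_of_even hk hsq))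
        hasDensity_squares
    have h₁ : l = 1 := hl.eq_of_hasDensity_ne not_hasDensity_odd_zero <|
      hasDensity_zero_mono (fun k ⟨hk, hx⟩ => not_not.1 fun hsq => hx (xseq_of_not_even hk hsq))
        hasDensity_squares
    exact zero_ne_one (h₀.symm.trans h₁)
  · rintro F ⟨-, hstat, -, hshift⟩
    have hF : F xLinf = F (shiftLinf xLinf) :=
      hshift shiftLinf (fun x => by simpa using hasDensity_empty) xLinf
    have hsum : StatTendsto (fun n => (xLinf + shiftLinf xLinf) n) 1 := by
      refine statTendsto_of_hasDensity_ne (hasDensity_zero_mono (fun k hk => ?_)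
        (hasDensity_zero_union hasDensity_squares
          (hasDensity_zero_preimage_add_one hasDensity_squares)))
      by_contra hsq
      simp only [Set.mem_union, Set.mem_preimage, Set.mem_ofPred_eq, not_or] at hsq
      exact hk (xseq_add_xseq_succ hsq.1 hsq.2)
    have h := hstat _ 1 hsum
    rw [map_add, ← hF] at h
    linarith
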